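/- Every countable subset of $\mathbb{C}^n$ is the convergence set of some divergent power series $f(s,t) = \sum_j P_j(s) t^j$ with $\deg P_j \le j$; that is, there exists such an $f$, not convergent as a series in $n+1$ variables, with $\mathrm{Conv}(f)$ equal to the given countable set. -/

import Mathlib

open MeasureTheory MvPolynomial
noncomputable section

/-- Euclidean norm on `ℂⁿ`. -/
def eNorm {n : ℕ} (x : Fin n → ℂ) : ℝ := Real.sqrt (∑ i, ‖x i‖ ^ 2)

/-- Plurisubharmonicity of an `EReal`-valued function on `ℂⁿ`: upper semicontinuous,
never `+∞`, and satisfying the sub-mean-value inequality on every complex line, where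
the (possibly `-∞`) circle average is expressed as the infimum over `m` of the circle
averages of the truncations `max (u ·) (-m)`. -/
def IsPSH {n : ℕ} (u : (Fin n → ℂ) → EReal) : Prop :=
  UpperSemicontinuous u ∧ (∀ x, u x < ⊤) ∧
  ∀ a b : Fin n → ℂ, ∀ r : ℝ, 0 < r →
    u a ≤ ⨅ m : ℕ,
      (((2 * Real.pi)⁻¹ * ∫ θ in (0:ℝ)..(2 * Real.pi),
        ((u (a + ((r : ℂ) * Complex.exp (θ * Complex.I)) • b) ⊔ ((-(m:ℝ) : ℝ) : EReal)).toReal) : ℝ) : EReal)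

/-- The (affine) convergence set of `f(s,t) = ∑ⱼ Pⱼ(s) tʲ`: the set of `s` where the
series in `t` converges absolutely for some `t > 0`. -/
def ConvSet {n : ℕ} (f : ℕ → MvPolynomial (Fin n) ℂ) : Set (Fin n → ℂ) :=
  {s | ∃ t : ℝ, 0 < t ∧ Summable (fun j => ‖eval s (f j)‖ * t ^ j)}

section
open Finset
noncomputable section ConvAux
namespace ConvAux

variable {n : ℕ} (a : ℕ → (Fin n → ℂ))

attribute [local instance] Classical.propDecidable

/-- half the minimal distance from `a i` to earlier *distinct* points (capped by 1/2). -/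
def beta (i : ℕ) : ℝ :=
  (1/2) * ((insert (1:ℝ) (((Finset.range i).filter fun k => a k ≠ a i).image
      fun k => dist (a k) (a i))).min' (insert_nonempty _ _))

lemma beta_pos (i : ℕ) : 0 < beta a i := by
  have hmem := Finset.min'_mem (insert (1:ℝ) (((Finset.range i).filter fun k => a k ≠ a i).image
      fun k => dist (a k) (a i))) (insert_nonempty _ _)
  rw [Finset.mem_insert] at hmem
  unfold beta
  rcases hmem with h | h
  · rw [h]; norm_num
  · simp only [Finset.mem_image, Finset.mem_filter, Finset.mem_range] at h
    obtain ⟨k, ⟨_, hne⟩, hEq⟩ := h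
    have hp : 0 < dist (a k) (a i) := dist_pos.2 hne
    rw [hEq] at hp
    linarith

lemma beta_le {k i : ℕ} (hk : k < i) (hne : a k ≠ a i) : 2 * beta a i ≤ dist (a k) (a i) := by
  have hmem : dist (a k) (a i) ∈ insert (1:ℝ) (((Finset.range i).filter fun k => a k ≠ a i).image
      fun k => dist (a k) (a i)) := by
    apply Finset.mem_insert_of_mem
    exact Finset.mem_image_of_mem _ (Finset.mem_filter.2 ⟨Finset.mem_range.2 hk, hne⟩)
  have := Finset.min'_le _ _ hmem
  unfold beta
  linarith

/-- tiny positive threshold for block `K`. -/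
def eta (K : ℕ) : ℝ :=
  (1/2) * ((insert ((1:ℝ)/(K+1)) ((Finset.range (K+1)).image fun i => beta a i)).min'
      (insert_nonempty _ _))

lemma eta_pos (K : ℕ) : 0 < eta a K := by
  have hmem := Finset.min'_mem (insert ((1:ℝ)/(K+1)) ((Finset.range (K+1)).image fun i => beta a i))
      (insert_nonempty _ _)
  rw [Finset.mem_insert] at hmem
  unfold eta
  rcases hmem with h | h
  · rw [h]; positivity
  · simp only [Finset.mem_image, Finset.mem_range] at h
    obtain ⟨i, _, hEq⟩ := h
    have := beta_pos a i
    rw [hEq] at this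
    linarith

lemma two_eta_le_beta {i K : ℕ} (hi : i ≤ K) : 2 * eta a K ≤ beta a i := by
  have hmem : beta a i ∈ insert ((1:ℝ)/(K+1)) ((Finset.range (K+1)).image fun i => beta a i) :=
    Finset.mem_insert_of_mem (Finset.mem_image_of_mem _ (Finset.mem_range.2 (Nat.lt_succ_of_le hi)))
  have := Finset.min'_le _ _ hmem
  unfold eta
  linarith

lemma two_eta_le_inv (K : ℕ) : 2 * eta a K ≤ 1/(K+1) := by
  have hmem : (1:ℝ)/(K+1) ∈ insert ((1:ℝ)/(K+1)) ((Finset.range (K+1)).image fun i => beta a i) :=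
    Finset.mem_insert_self _ _
  have := Finset.min'_le _ _ hmem
  unfold eta
  linarith

lemma eta_lt_one (K : ℕ) : eta a K < 1 := by
  have h := two_eta_le_inv a K
  have h2 : (1:ℝ)/(K+1) ≤ 1 := by
    rw [div_le_one (by positivity)]
    have : (0:ℝ) ≤ K := Nat.cast_nonneg K
    linarith
  linarith [eta_pos a K]

/-- `log (1/η_K) ≥ 0`. -/
def Lg (K : ℕ) : ℝ := Real.log (1 / eta a K)

lemma Lg_nonneg (K : ℕ) : 0 ≤ Lg a K := by
  apply Real.log_nonneg
  rw [le_div_iff₀ (eta_pos a K)]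
  nlinarith [eta_lt_one a K, eta_pos a K]

def bnd (K : ℕ) : ℕ := K + ⌈Lg a K⌉₊ + 1

/-- starting index of block `K`. -/
def NN : ℕ → ℕ
  | 0 => bnd a 0
  | (K+1) => max (NN K + n ^ K) (bnd a (K+1))

lemma bnd_le_NN (K : ℕ) : bnd a K ≤ NN a K := by
  cases K with
  | zero => exact le_refl _
  | succ K => exact le_max_right _ _

lemma NN_succ_ge (K : ℕ) : NN a K + n ^ K ≤ NN a (K+1) := le_max_left _ _

lemma K_lt_NN (K : ℕ) : K < NN a K :=
  lt_of_lt_of_le (by unfold bnd; omega) (bnd_le_NN a K)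

lemma NN_strictMono (hn : 1 ≤ n) : StrictMono (NN a) := by
  apply strictMono_nat_of_lt_succ
  intro K
  have h1 : 1 ≤ n ^ K := Nat.one_le_pow _ _ hn
  have := NN_succ_ge a K
  omega

lemma block_unique (hn : 1 ≤ n) {K K' j : ℕ}
    (h : NN a K ≤ j ∧ j < NN a K + n ^ K) (h' : NN a K' ≤ j ∧ j < NN a K' + n ^ K') :
    K = K' := by
  by_contra hne
  have key : ∀ {A B : ℕ}, A < B → NN a A ≤ j → j < NN a A + n ^ A → NN a B ≤ j → False := by
    intro A B hAB _ hA2 hB1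
    have h1 : NN a A + n ^ A ≤ NN a (A+1) := NN_succ_ge a A
    have h2 : NN a (A+1) ≤ NN a B := (NN_strictMono a hn).monotone (Nat.succ_le_of_lt hAB)
    omega
  rcases Nat.lt_or_ge K K' with hlt | hge
  · exact key hlt h.1 h.2 h'.1
  · exact key (lt_of_le_of_ne hge (Ne.symm hne)) h'.1 h'.2 h.1

/-- the tuple of coordinates encoded by `j` within block `K`. -/
def tau (K j : ℕ) (hj : j - NN a K < n ^ K) : Fin K → Fin n :=
  finFunctionFinEquiv.symm ⟨j - NN a K, hj⟩

def blockPoly (K j : ℕ) : MvPolynomial (Fin n) ℂ :=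
  if hj : j - NN a K < n ^ K then
    (C ((Real.exp ((j:ℝ)^2) : ℝ) : ℂ)) *
      ∏ k : Fin K, (X (tau a K j hj k) - C (a k (tau a K j hj k)))
  else 0

/-- the series. -/
def F (j : ℕ) : MvPolynomial (Fin n) ℂ :=
  if h : ∃ K, NN a K ≤ j ∧ j < NN a K + n ^ K then blockPoly a h.choose j else 0

lemma F_apply (hn : 1 ≤ n) {K j : ℕ} (h : NN a K ≤ j ∧ j < NN a K + n ^ K) :
    F a j = blockPoly a K j := by
  unfold F
  rw [dif_pos ⟨K, h⟩]
  congr 1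
  exact block_unique a hn (⟨K, h⟩ : ∃ K, NN a K ≤ j ∧ j < NN a K + n ^ K).choose_spec h

lemma deg_X_sub_C (i : Fin n) (c : ℂ) : (X i - C c : MvPolynomial (Fin n) ℂ).totalDegree ≤ 1 := by
  rw [sub_eq_add_neg, ← C_neg]
  refine le_trans (totalDegree_add _ _) ?_
  simp [totalDegree_X, totalDegree_C]

lemma blockPoly_degree {K j : ℕ} (hK : K ≤ j) : (blockPoly a K j).totalDegree ≤ j := by
  unfold blockPoly
  split
  · refine le_trans (totalDegree_mul _ _) ?_
    rw [totalDegree_C, zero_add]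
    refine le_trans (totalDegree_finset_prod _ _) (le_trans ?_ hK)
    refine le_trans (Finset.sum_le_sum fun k _ => deg_X_sub_C (tau a K j _ k) _) ?_
    simp
  · simp

lemma F_degree (j : ℕ) : (F a j).totalDegree ≤ j := by
  unfold F
  split
  · next h =>
    have hs := h.choose_spec
    exact blockPoly_degree a (le_trans (le_of_lt (K_lt_NN a _)) hs.1)
  · simp

lemma blockPoly_eval {K j : ℕ} (hj : j - NN a K < n ^ K) (s : Fin n → ℂ) :
    eval s (blockPoly a K j) =
      ((Real.exp ((j:ℝ)^2) : ℝ) : ℂ) * ∏ k : Fin K, (s (tau a K j hj k) - a k (tau a K j hj k)) := by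
  unfold blockPoly
  rw [dif_pos hj]
  simp [map_prod]

/-- encoding: for any tuple `τ`, the corresponding index in block `K`. -/
lemma encode (K : ℕ) (τ : Fin K → Fin n) :
    ∃ j, (NN a K ≤ j ∧ j < NN a K + n ^ K) ∧ ∃ hj : j - NN a K < n ^ K,
      tau a K j hj = τ := by
  refine ⟨NN a K + (finFunctionFinEquiv τ : ℕ), ⟨Nat.le_add_right _ _, by
      have := (finFunctionFinEquiv τ).isLt; omega⟩, ?_⟩
  have hval : NN a K + (finFunctionFinEquiv τ : ℕ) - NN a K = (finFunctionFinEquiv τ : ℕ) := by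
    omega
  refine ⟨by rw [hval]; exact (finFunctionFinEquiv τ).isLt, ?_⟩
  unfold tau
  have : (⟨NN a K + (finFunctionFinEquiv τ : ℕ) - NN a K, by rw [hval]; exact (finFunctionFinEquiv τ).isLt⟩ :
      Fin (n ^ K)) = finFunctionFinEquiv τ := by
    ext
    simp [hval]
  rw [this, Equiv.symm_apply_apply]

end ConvAux
end ConvAux

noncomputable section ConvMain
namespace ConvAux
open Filter
variable {n : ℕ} (a : ℕ → (Fin n → ℂ))
attribute [local instance] Classical.propDecidable

lemma eval_F_eq_zero (hn : 1 ≤ n) {i j : ℕ} (hj : NN a (i+1) ≤ j) :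
    eval (a i) (F a j) = 0 := by
  by_cases h : ∃ K, NN a K ≤ j ∧ j < NN a K + n ^ K
  · obtain ⟨K, hK⟩ := h
    rw [F_apply a hn hK]
    have hiK : i < K := by
      by_contra hle
      push_neg at hle
      have e1 : NN a K + n ^ K ≤ NN a (K+1) := NN_succ_ge a K
      have e2 : NN a (K+1) ≤ NN a (i+1) :=
        (NN_strictMono a hn).monotone (Nat.succ_le_succ hle)
      obtain ⟨hK1, hK2⟩ := hK
      omega
    have hj' : j - NN a K < n ^ K := by obtain ⟨hK1, hK2⟩ := hK; omega
    rw [blockPoly_eval a hj']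
    have : ∏ k : Fin K, (a i (tau a K j hj' k) - a (k : ℕ) (tau a K j hj' k)) = 0 := by
      apply Finset.prod_eq_zero (Finset.mem_univ (⟨i, hiK⟩ : Fin K))
      simp
    rw [this, mul_zero]
  · unfold F
    rw [dif_neg h]
    simp

lemma mem_convSet (hn : 1 ≤ n) (i : ℕ) : a i ∈ ConvSet (F a) := by
  refine ⟨1, one_pos, summable_of_ne_finset_zero (s := Finset.range (NN a (i+1))) ?_⟩
  intro j hj
  rw [Finset.mem_range, not_lt] at hj
  rw [eval_F_eq_zero a hn hj]
  simp

/-- coordinate attaining the sup distance. -/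
lemma exists_coord (hn : 1 ≤ n) (x y : Fin n → ℂ) :
    ∃ i : Fin n, dist x y ≤ ‖x i - y i‖ := by
  have hne : (Finset.univ : Finset (Fin n)).Nonempty := ⟨⟨0, hn⟩, Finset.mem_univ _⟩
  obtain ⟨i, _, hi⟩ := Finset.exists_mem_eq_sup Finset.univ hne (fun i => nndist (x i) (y i))
  refine ⟨i, ?_⟩
  rw [dist_nndist, nndist_pi_def, hi, ← Complex.dist_eq, dist_nndist]

/-- Main combinatorial lemma: for `s` outside the range, there are infinitely many
"good" block indices `K` where all the first `K` points are `η_K`-far from `s`. -/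
lemma good_blocks (hs : ∀ k, s ≠ a k) :
    ∀ B : ℕ, ∃ K, B ≤ K ∧ ∀ k < K, eta a K ≤ dist s (a k) := by
  by_contra hcon
  push_neg at hcon
  obtain ⟨B, hB⟩ := hcon
  -- for every K ≥ B there is k < K with dist s (a k) < eta a K; least such:
  have hex : ∀ K, B ≤ K → ∃ k, k < K ∧ dist s (a k) < eta a K := by
    intro K hK
    obtain ⟨k, hk1, hk2⟩ := hB K hK
    exact ⟨k, hk1, hk2⟩
  -- goal: derive a good block, contradiction.
  -- distances to points with index < B (plus 1) have positive min dv
  set dv : ℝ := (insert (1:ℝ) ((Finset.range B).image fun v => dist s (a v))).min'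
      (insert_nonempty _ _) with hdv
  have hdvpos : 0 < dv := by
    have hmem := Finset.min'_mem (insert (1:ℝ) ((Finset.range B).image fun v => dist s (a v)))
        (insert_nonempty _ _)
    rw [Finset.mem_insert] at hmem
    rcases hmem with h | h
    · rw [hdv, h]; norm_num
    · simp only [Finset.mem_image, Finset.mem_range] at h
      obtain ⟨v, _, hEq⟩ := h
      have : 0 < dist s (a v) := dist_pos.2 (hs v)
      rw [hdv, ← hEq]; exact this
  have hdvle : ∀ v < B, dv ≤ dist s (a v) := by
    intro v hv
    apply Finset.min'_le
    exact Finset.mem_insert_of_mem (Finset.mem_image_of_mem _ (Finset.mem_range.2 hv))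
  -- choose K* ≥ B with eta a K* < dv
  obtain ⟨m, hm⟩ := exists_nat_gt (1/dv)
  set Ks : ℕ := B + m + 1 with hKs
  have hKsB : B ≤ Ks := by omega
  have hetaKs : eta a Ks < dv := by
    have h1 : 2 * eta a Ks ≤ 1/(Ks+1) := two_eta_le_inv a Ks
    have h2 : (1:ℝ)/(Ks+1) < dv := by
      rw [div_lt_iff₀ (by positivity)]
      rw [div_lt_iff₀ hdvpos] at hm
      have hcast : (m:ℝ) ≤ (Ks:ℝ) := by
        have : m ≤ Ks := by omega
        exact_mod_cast this
      nlinarith [hdvpos]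
    nlinarith [eta_pos a Ks]
  obtain ⟨k0, hk0K, hk0d⟩ := hex Ks hKsB
  -- least such k0
  have hexk : ∃ k, k < Ks ∧ dist s (a k) < eta a Ks := ⟨k0, hk0K, hk0d⟩
  set kk : ℕ := Nat.find hexk with hkk
  obtain ⟨hkk1, hkk2⟩ := Nat.find_spec hexk
  have hmin : ∀ k < kk, ¬(k < Ks ∧ dist s (a k) < eta a Ks) := fun k hk => Nat.find_min hexk hk
  -- kk ≥ B
  have hkkB : B ≤ kk := by
    by_contra hlt
    push_neg at hlt
    have := hdvle kk hlt
    linarith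
  -- kk is a good block: ∀ k < kk, eta a kk ≤ dist s (a k)
  have hgood : ∀ k < kk, eta a kk ≤ dist s (a k) := by
    intro k hk
    have hkKs : k < Ks := lt_trans hk hkk1
    have hge : eta a Ks ≤ dist s (a k) := by
      by_contra hlt2
      push_neg at hlt2
      exact hmin k hk ⟨hkKs, hlt2⟩
    have hne : a k ≠ a kk := by
      intro hEq
      rw [hEq] at hge
      linarith
    have htri : dist (a k) (a kk) ≤ dist (a k) s + dist s (a kk) := dist_triangle _ _ _
    have hbl : 2 * beta a kk ≤ dist (a k) (a kk) := beta_le a hk hne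
    have hkkKs : kk ≤ Ks := le_of_lt hkk1
    have he1 : 2 * eta a Ks ≤ beta a kk := two_eta_le_beta a hkkKs
    have he2 : 2 * eta a kk ≤ beta a kk := two_eta_le_beta a (le_refl kk)
    have hc : dist (a k) s = dist s (a k) := dist_comm _ _
    have hep := eta_pos a Ks
    have hep2 := eta_pos a kk
    linarith
  -- contradiction with hB at kk
  obtain ⟨k, hk1, hk2⟩ := hB kk hkkB
  have := hgood k hk1
  linarith

lemma not_summable (hn : 1 ≤ n) {s : Fin n → ℂ} (hs : ∀ k, s ≠ a k)
    {t : ℝ} (ht : 0 < t) :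
    ¬ Summable (fun j => ‖eval s (F a j)‖ * t ^ j) := by
  intro hsum
  have htend := hsum.tendsto_atTop_zero
  have hev : ∀ᶠ j in atTop, ‖eval s (F a j)‖ * t ^ j < 1 :=
    htend.eventually (gt_mem_nhds one_pos)
  obtain ⟨J, hJ⟩ := Filter.eventually_atTop.1 hev
  -- pick a good block K ≥ max J ⌈-2 log t⌉
  obtain ⟨K, hKge, hKgood⟩ := good_blocks a hs (max J (⌈(-2) * Real.log t⌉₊))
  -- choose the coordinates tuple
  have hcoord : ∀ k : Fin K, ∃ i : Fin n, dist s (a k) ≤ ‖s i - a k i‖ :=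
    fun k => exists_coord hn s (a k)
  choose τ hτ using hcoord
  obtain ⟨j, hjblock, hj', htau⟩ := encode a K τ
  -- evaluate
  have heval : eval s (F a j) =
      ((Real.exp ((j:ℝ)^2) : ℝ) : ℂ) * ∏ k : Fin K, (s (tau a K j hj' k) - a k (tau a K j hj' k)) := by
    rw [F_apply a hn hjblock, blockPoly_eval a hj']
  -- lower bound on the term
  have habs : Real.exp ((j:ℝ)^2) * (eta a K) ^ K ≤ ‖eval s (F a j)‖ := by
    rw [heval, norm_mul, norm_prod]
    have h1 : ‖((Real.exp ((j:ℝ)^2) : ℝ) : ℂ)‖ = Real.exp ((j:ℝ)^2) := by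
      rw [Complex.norm_real, Real.norm_eq_abs, abs_of_pos (Real.exp_pos _)]
    rw [h1]
    apply mul_le_mul_of_nonneg_left _ (le_of_lt (Real.exp_pos _))
    have : (eta a K) ^ K = ∏ _k : Fin K, eta a K := by
      rw [Finset.prod_const, Finset.card_univ, Fintype.card_fin]
    rw [this]
    apply Finset.prod_le_prod
    · intro k _; exact le_of_lt (eta_pos a K)
    · intro k _
      rw [htau]
      exact le_trans (hKgood k k.isLt) (hτ k)
  -- arithmetic: the term is ≥ 1
  have hjK : (K:ℝ) + (⌈Lg a K⌉₊ + 1 : ℕ) ≤ (j:ℝ) := by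
    have h1 : bnd a K ≤ NN a K := bnd_le_NN a K
    have h2 : NN a K ≤ j := hjblock.1
    have : K + (⌈Lg a K⌉₊ + 1) ≤ j := by unfold bnd at h1; omega
    exact_mod_cast this
  have hKj : (K:ℝ) ≤ (j:ℝ) := by
    have := K_lt_NN a K
    have h2 : NN a K ≤ j := hjblock.1
    have : (K:ℕ) ≤ j := by omega
    exact_mod_cast this
  have hlogt : (-2) * Real.log t ≤ (j:ℝ) := by
    have h1 : ⌈(-2) * Real.log t⌉₊ ≤ K := le_trans (le_max_right _ _) hKge
    have h2 : ((-2) * Real.log t) ≤ (⌈(-2) * Real.log t⌉₊ : ℝ) := Nat.le_ceil _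
    have h3 : ((⌈(-2) * Real.log t⌉₊ : ℕ) : ℝ) ≤ (K:ℝ) := by exact_mod_cast h1
    linarith
  have hLg : (K:ℝ) * Lg a K ≤ (j:ℝ)^2 / 4 := by
    have hLle : Lg a K ≤ (⌈Lg a K⌉₊ : ℝ) + 1 := by
      have := Nat.le_ceil (Lg a K); linarith
    have hKnn : (0:ℝ) ≤ K := Nat.cast_nonneg _
    have hCnn : (0:ℝ) ≤ (⌈Lg a K⌉₊ : ℝ) + 1 := by positivity
    have hcast : ((⌈Lg a K⌉₊ + 1 : ℕ) : ℝ) = (⌈Lg a K⌉₊ : ℝ) + 1 := by push_cast; ring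
    rw [hcast] at hjK
    have hstep1 : (K:ℝ) * Lg a K ≤ (K:ℝ) * ((⌈Lg a K⌉₊:ℝ)+1) :=
      mul_le_mul_of_nonneg_left hLle hKnn
    have hstep2 : 4 * ((K:ℝ) * ((⌈Lg a K⌉₊:ℝ)+1)) ≤ ((K:ℝ) + ((⌈Lg a K⌉₊:ℝ)+1))^2 := by
      nlinarith [sq_nonneg ((K:ℝ) - ((⌈Lg a K⌉₊:ℝ)+1))]
    have hstep3 : ((K:ℝ) + ((⌈Lg a K⌉₊:ℝ)+1))^2 ≤ (j:ℝ)^2 :=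
      pow_le_pow_left₀ (by positivity) hjK 2
    linarith
  -- term value
  have hterm : (1:ℝ) ≤ ‖eval s (F a j)‖ * t ^ j := by
    have h1 : (eta a K) ^ K = Real.exp ((K:ℝ) * Real.log (eta a K)) := by
      conv_lhs => rw [(Real.exp_log (eta_pos a K)).symm]
      rw [← Real.exp_nat_mul]
    have h2 : t ^ j = Real.exp ((j:ℝ) * Real.log t) := by
      conv_lhs => rw [(Real.exp_log ht).symm]
      rw [← Real.exp_nat_mul]
    have hcomb : Real.exp ((j:ℝ)^2) * (eta a K)^K * t^j
        = Real.exp ((j:ℝ)^2 + (K:ℝ) * Real.log (eta a K) + (j:ℝ) * Real.log t) := by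
      rw [h1, h2, ← Real.exp_add, ← Real.exp_add]
    have hexp0 : (0:ℝ) ≤ (j:ℝ)^2 + (K:ℝ) * Real.log (eta a K) + (j:ℝ) * Real.log t := by
      have hKlog : (K:ℝ) * Real.log (eta a K) = -((K:ℝ) * Lg a K) := by
        unfold Lg
        rw [one_div, Real.log_inv]
        ring
      have hjn : (0:ℝ) ≤ (j:ℝ) := Nat.cast_nonneg _
      have hjt : -((j:ℝ)^2/2) ≤ (j:ℝ) * Real.log t := by nlinarith [hlogt]
      rw [hKlog]
      nlinarith [hLg]
    have hge1 : (1:ℝ) ≤ Real.exp ((j:ℝ)^2) * (eta a K)^K * t^j := by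
      rw [hcomb]
      exact Real.one_le_exp hexp0
    have hmul : Real.exp ((j:ℝ)^2) * (eta a K)^K * t^j ≤ ‖eval s (F a j)‖ * t^j :=
      mul_le_mul_of_nonneg_right habs (by positivity)
    linarith
  have hKjnat : K ≤ j := le_trans (le_of_lt (K_lt_NN a K)) hjblock.1
  have := hJ j (le_trans (le_trans (le_max_left _ _) hKge) hKjnat)
  linarith

end ConvAux
end ConvMain

noncomputable section Final
open ConvAux

lemma not_countable_univ_pi {n : ℕ} (hn : 1 ≤ n) :
    ¬ (Set.univ : Set (Fin n → ℂ)).Countable := by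
  intro h
  have hinj : Function.Injective (fun r : ℝ => (fun _ : Fin n => (r:ℂ))) := by
    intro r r' hrr
    have h0 := congrFun hrr ⟨0, hn⟩
    simp only at h0
    exact_mod_cast h0
  have h2 := h.preimage hinj
  rw [Set.preimage_univ] at h2
  exact Cardinal.not_countable_real h2


end Final
end

open ConvAux Finset

/-- every countable subset of `ℂⁿ` (`n ≥ 1`) is the convergence set of
some divergent power series `f(s,t) = ∑ⱼ Pⱼ(s)tʲ` with `deg Pⱼ ≤ j`. -/
theorem countable_set_is_convergence_set {n : ℕ} (hn : 1 ≤ n)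
    (S : Set (Fin n → ℂ)) (hS : S.Countable) :
    ∃ f : ℕ → MvPolynomial (Fin n) ℂ, (∀ j, (f j).totalDegree ≤ j) ∧
      ConvSet f ≠ Set.univ ∧ ConvSet f = S := by
  rcases S.eq_empty_or_nonempty with hSe | hSne
  · refine ⟨fun j => C ((j:ℂ)^j), fun j => by rw [totalDegree_C]; exact Nat.zero_le j, ?_⟩
    have hdiv : ∀ s, s ∉ ConvSet (fun j => (C ((j:ℂ)^j) : MvPolynomial (Fin n) ℂ)) := by
      intro s hsmem
      obtain ⟨t, ht, hsum⟩ := hsmem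
      have htend := hsum.tendsto_atTop_zero
      obtain ⟨J, hJ⟩ := Filter.eventually_atTop.1 (htend.eventually (gt_mem_nhds one_pos))
      set j := J + ⌈1/t⌉₊ + 1 with hjdef
      have h1 : ‖eval s (C ((j:ℂ)^j))‖ * t ^ j = ((j:ℝ) * t) ^ j := by
        rw [eval_C, norm_pow, Complex.norm_natCast, mul_pow]
      have hjt : (1:ℝ) ≤ (j:ℝ) * t := by
        have hle : (1/t) ≤ (⌈1/t⌉₊:ℝ) := Nat.le_ceil _
        have hjge : (⌈1/t⌉₊:ℝ) + 1 ≤ (j:ℝ) := by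
          have : ⌈1/t⌉₊ + 1 ≤ j := by omega
          exact_mod_cast this
        rw [div_le_iff₀ ht] at hle
        nlinarith
      have h2 : (1:ℝ) ≤ ((j:ℝ) * t)^j := by
        have := pow_le_pow_left₀ (by norm_num : (0:ℝ) ≤ 1) hjt j
        simpa using this
      have h3 := hJ j (by omega)
      rw [h1] at h3
      linarith
    constructor
    · intro hEq
      have : (fun _ : Fin n => (0:ℂ)) ∈ ConvSet (fun j => (C ((j:ℂ)^j) : MvPolynomial (Fin n) ℂ)) :=
        hEq ▸ Set.mem_univ _
      exact hdiv _ this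
    · rw [hSe]
      ext s
      simp only [Set.mem_empty_iff_false, iff_false]
      exact hdiv s
  · obtain ⟨a, hSa⟩ := hS.exists_eq_range hSne
    refine ⟨F a, F_degree a, ?_⟩
    have hconv : ConvSet (F a) = S := by
      ext s
      constructor
      · intro hsmem
        by_contra hns
        obtain ⟨t, ht, hsum⟩ := hsmem
        have hsk : ∀ k, s ≠ a k := by
          intro k hEq
          apply hns
          rw [hSa]
          exact ⟨k, hEq.symm⟩
        exact not_summable a hn hsk ht hsum
      · intro hsS
        rw [hSa] at hsS
        obtain ⟨i, hi⟩ := hsS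
        rw [← hi]
        exact mem_convSet a hn i
    refine ⟨?_, hconv⟩
    intro hEq
    rw [hconv] at hEq
    rw [hEq] at hS
    exact not_countable_univ_pi hn hS


end
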